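/- arXiv:1912.06217 — 6 statements merged into one kernel-verified Lean document; each statement's English description precedes it below -/
import Mathlib

section
/- Let u ≥ 0 be a real number and k a natural number with k·u < 1. Suppose δ₁, …, δ_k are real numbers with |δᵢ| ≤ u for each i, and ρ₁, …, ρ_k ∈ {1, −1}. Then |∏_{i=1}^k (1+δᵢ)^{ρᵢ} − 1| ≤ k·u/(1 − k·u); that is, the product equals 1 + θ_k for some θ_k with |θ_k| ≤ γ_k(u). -/
/-! Each factor `(1 + δᵢ) ^ (±1)` lies in `[1 - u, (1 - u)⁻¹]`, so the product lies in
`[(1 - u) ^ k, ((1 - u) ^ k)⁻¹]`. Bernoulli's inequality `1 - k u ≤ (1 - u) ^ k` widens this to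
`[1 - k u, (1 - k u)⁻¹]`, and every point of that interval is within `γ_k(u)` of `1`. -/

/-- For `u ≥ 0` and `t` with `t·u < 1`, `γ_t(u) := t·u/(1 − t·u)`. -/
noncomputable def gam (t u : ℝ) : ℝ := t * u / (1 - t * u)

open Finset

lemma abs_sub_one_le_gam_of_mem_Icc {t u x : ℝ} (h0 : 0 ≤ t * u) (h1 : t * u < 1)
    (hx : x ∈ Set.Icc (1 - t * u) (1 - t * u)⁻¹) : |x - 1| ≤ gam t u := by
  have hpos : 0 < 1 - t * u := by linarith
  have hgam : gam t u = (1 - t * u)⁻¹ - 1 := by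
    rw [gam]
    field_simp
    ring
  have hle_gam : t * u ≤ gam t u := by
    rw [gam, le_div_iff₀ hpos]
    nlinarith
  rw [abs_le]
  constructor <;> linarith [hx.1, hx.2]

lemma zpow_mem_Icc_of_abs_le {δ u : ℝ} {ρ : ℤ} (hδ : |δ| ≤ u) (hu : u < 1)
    (hρ : ρ = 1 ∨ ρ = -1) : (1 + δ) ^ ρ ∈ Set.Icc (1 - u) (1 - u)⁻¹ := by
  obtain ⟨hδlo, hδhi⟩ := abs_le.mp hδ
  have hpos : 0 < 1 - u := by linarith
  rcases hρ with rfl | rfl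
  · rw [zpow_one]
    refine ⟨by linarith, ?_⟩
    rw [← one_div, le_div_iff₀ hpos]
    nlinarith
  · rw [zpow_neg_one]
    refine ⟨?_, inv_anti₀ hpos (by linarith)⟩
    rw [← one_div, le_div_iff₀ (by linarith)]
    nlinarith

lemma Finset.prod_mem_Icc_pow_card {ι : Type*} (s : Finset ι) {f : ι → ℝ} {a : ℝ} (ha : 0 < a)
    (hf : ∀ i ∈ s, f i ∈ Set.Icc a a⁻¹) : ∏ i ∈ s, f i ∈ Set.Icc (a ^ #s) (a ^ #s)⁻¹ := by
  constructor
  · calc a ^ #s = ∏ _i ∈ s, a := (prod_const a).symm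
      _ ≤ ∏ i ∈ s, f i := prod_le_prod (fun _ _ => ha.le) fun i hi => (hf i hi).1
  · calc ∏ i ∈ s, f i ≤ ∏ _i ∈ s, a⁻¹ :=
          prod_le_prod (fun i hi => ha.le.trans (hf i hi).1) fun i hi => (hf i hi).2
      _ = (a ^ #s)⁻¹ := by rw [prod_const, inv_pow]

lemma one_sub_mul_le_one_sub_pow {u : ℝ} (hu : u ≤ 2) (n : ℕ) : 1 - n * u ≤ (1 - u) ^ n := by
  simpa [sub_eq_add_neg] using one_add_le_pow_of_two_add_nonneg (a := -u) (by linarith) n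

/-- If `|δᵢ| ≤ u` and `ρᵢ = ±1` for `i = 1, …, k`, and `k·u < 1`, then
`∏ (1+δᵢ)^{ρᵢ} = 1 + θ` with `|θ| ≤ γ_k(u) = k·u/(1−k·u)`. -/
theorem stmt_0 (u : ℝ) (hu : 0 ≤ u) (k : ℕ) (hk : (k : ℝ) * u < 1)
    (δ : Fin k → ℝ) (hδ : ∀ i, |δ i| ≤ u)
    (ρ : Fin k → ℤ) (hρ : ∀ i, ρ i = 1 ∨ ρ i = -1) :
    |(∏ i, (1 + δ i) ^ (ρ i)) - 1| ≤ gam k u := by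
  rcases k.eq_zero_or_pos with rfl | hk0
  · simp [gam]
  have hu1 : u < 1 := (le_mul_of_one_le_left hu (by exact_mod_cast hk0)).trans_lt hk
  have hprod := univ.prod_mem_Icc_pow_card (sub_pos.2 hu1) fun i _ =>
    zpow_mem_Icc_of_abs_le (hδ i) hu1 (hρ i)
  rw [card_univ, Fintype.card_fin] at hprod
  have hbern := one_sub_mul_le_one_sub_pow (by linarith) k
  exact abs_sub_one_le_gam_of_mem_Icc (by positivity) hk
    ⟨hbern.trans hprod.1, hprod.2.trans (inv_anti₀ (by linarith) hbern)⟩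
end

section
/- Let u ≥ 0 be a real number and k, j natural numbers with (k+j)·u < 1. If θ_k and θ_j are real numbers with |θ_k| ≤ γ_k(u) and |θ_j| ≤ γ_j(u), then |(1+θ_k)(1+θ_j) − 1| ≤ γ_{k+j}(u). -/
theorem abs_one_add_mul_one_add_sub_one_le (x y : ℝ) :
    |(1 + x) * (1 + y) - 1| ≤ (1 + |x|) * (1 + |y|) - 1 :=
  calc |(1 + x) * (1 + y) - 1| = |x + y + x * y| := by ring_nf
    _ ≤ |x| + |y| + |x| * |y| := by
      rw [← abs_mul]; exact (abs_add_le _ _).trans (add_le_add_left (abs_add_le _ _) _)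
    _ = (1 + |x|) * (1 + |y|) - 1 := by ring

theorem one_add_gam {t u : ℝ} (h : t * u ≠ 1) : 1 + gam t u = (1 - t * u)⁻¹ := by
  have : 1 - t * u ≠ 0 := sub_ne_zero.mpr (Ne.symm h)
  unfold gam
  field_simp
  ring

theorem one_add_gam_mul_one_add_gam_le {s t u : ℝ} (hs : 0 ≤ s * u) (ht : 0 ≤ t * u)
    (hst : (s + t) * u < 1) :
    (1 + gam s u) * (1 + gam t u) ≤ 1 + gam (s + t) u := by
  rw [one_add_gam (by nlinarith), one_add_gam (by nlinarith), one_add_gam hst.ne, ← mul_inv]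
  -- `1 - (s + t) u ≤ (1 - s u)(1 - t u)` because the cross term `s u · t u` is nonnegative
  exact inv_anti₀ (by linarith) (by nlinarith)

/-- If `|θ_k| ≤ γ_k(u)`, `|θ_j| ≤ γ_j(u)` and `(k+j)·u < 1`, then
`(1+θ_k)(1+θ_j) = 1 + θ_{k+j}` with `|θ_{k+j}| ≤ γ_{k+j}(u)`. -/
theorem stmt_1 (u : ℝ) (hu : 0 ≤ u) (k j : ℕ) (hkj : ((k : ℝ) + j) * u < 1)
    (θk θj : ℝ) (hθk : |θk| ≤ gam k u) (hθj : |θj| ≤ gam j u) :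
    |(1 + θk) * (1 + θj) - 1| ≤ gam ((k : ℝ) + j) u := by
  have hk : 0 ≤ (k : ℝ) * u := by positivity
  have hj : 0 ≤ (j : ℝ) * u := by positivity
  calc |(1 + θk) * (1 + θj) - 1| ≤ (1 + |θk|) * (1 + |θj|) - 1 :=
        abs_one_add_mul_one_add_sub_one_le θk θj
    _ ≤ (1 + gam k u) * (1 + gam j u) - 1 := by
      gcongr
      linarith [abs_nonneg θk]
    _ ≤ gam ((k : ℝ) + j) u := by linarith [one_add_gam_mul_one_add_gam_le hk hj hkj]
end

section
/- Let u_l and u_h be real numbers with 0 < u_h ≤ u_l < 1, set M := u_l/u_h, and let m ≥ 1 be a natural number such that (M + m − 1)·u_h < 1. Then (1 + u_l)(1 + γ_{m−1}(u_h)) − 1 ≤ γ_{M+m−1}(u_h), where γ with a real subscript t is defined by γ_t(u) = t·u/(1 − t·u). -/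
/-- With `0 < u_h ≤ u_l < 1`, `M = u_l/u_h`, `m ≥ 1` and `(M+m−1)·u_h < 1`, the
mixed precision bound satisfies `(1+u_l)(1+γ_{m−1}(u_h)) − 1 ≤ γ_{M+m−1}(u_h)`. -/
theorem stmt_7 (ul uh : ℝ) (huh : 0 < uh) (hul : uh ≤ ul) (hul1 : ul < 1)
    (m : ℕ) (hm : 1 ≤ m)
    (hM : (ul / uh + (m : ℝ) - 1) * uh < 1) :
    (1 + ul) * (1 + gam ((m : ℝ) - 1) uh) - 1 ≤ gam (ul / uh + (m : ℝ) - 1) uh := by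
  have ht : (0:ℝ) ≤ (m : ℝ) - 1 := by
    have : (1:ℝ) ≤ (m : ℝ) := by exact_mod_cast hm
    linarith
  set t : ℝ := (m : ℝ) - 1 with htdef
  have hb : 0 ≤ t * uh := mul_nonneg ht huh.le
  have hmm : (ul / uh + (m : ℝ) - 1) * uh = ul + t * uh := by
    field_simp
    ring
  have hsum : ul + t * uh < 1 := by rw [← hmm]; exact hM
  have hul0 : 0 < ul := lt_of_lt_of_le huh hul
  have h1 : 0 < 1 - t * uh := by linarith
  have h2 : 0 < 1 - (ul + t * uh) := by linarith
  rw [gam, gam, hmm]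
  have e : (ul + t * uh) / (1 - (ul + t * uh)) -
      ((1 + ul) * (1 + t * uh / (1 - t * uh)) - 1) =
      (ul * (ul + t * uh)) / ((1 - (ul + t * uh)) * (1 - t * uh)) := by
    field_simp
    ring
  nlinarith [div_nonneg (mul_nonneg hul0.le (by linarith : (0:ℝ) ≤ ul + t * uh))
      (mul_nonneg h2.le h1.le), e]
end

section
/- Let m ≥ 2 be a natural number, let u_h, u_l ≥ 0 be real numbers with (m−1)·u_h < 1, let x, y ∈ ℝ^m, let δ₁, …, δ_{m−1} be real numbers with |δ_k| ≤ u_h for all k, and let δ₀ be a real number with |δ₀| ≤ u_l. Define ŝ₁ := x₁y₁ and ŝ_{k+1} := (ŝ_k + x_{k+1}y_{k+1})(1 + δ_k) for k = 1, …, m−1. Then there exists Δx ∈ ℝ^m with |Δx_i| ≤ ((1+u_l)(1+γ_{m−1}(u_h)) − 1)·|x_i| for every i such that (1+δ₀)·ŝ_m = Σ_{i=1}^m (x_i + Δx_i)·y_i. -/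
/-!
Unrolling the recurrence gives `ŝ_m = ∑ᵢ xᵢ yᵢ Pᵢ`, where `Pᵢ` is a product of at most `m − 1`
factors `1 + δ_k`; the backward error `Δxᵢ := xᵢ ((1 + δ₀) Pᵢ − 1)` moves all rounding onto `x`.
Relative errors compose as `|ab − 1| ≤ AB − 1` whenever `|a − 1| ≤ A − 1` and `|b − 1| ≤ B − 1`,
so `|(1 + δ₀) Pᵢ − 1| ≤ (1 + u_l)(1 + u_h)^(m−1) − 1`, and `(1 + u)ⁿ ≤ 1 + γₙ(u)` because
`(1 + u)ⁿ (1 − nu) ≤ 1`.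
-/

open Finset

theorem abs_mul_sub_one_le {a b A B : ℝ} (ha : |a - 1| ≤ A - 1) (hb : |b - 1| ≤ B - 1) :
    |a * b - 1| ≤ A * B - 1 := by
  have hA : 0 ≤ A - 1 := (abs_nonneg _).trans ha
  calc |a * b - 1| = |(a - 1) * (b - 1) + (a - 1) + (b - 1)| := by ring_nf
    _ ≤ |a - 1| * |b - 1| + |a - 1| + |b - 1| := by
      grw [abs_add_le, abs_add_le, abs_mul]
    _ ≤ (A - 1) * (B - 1) + (A - 1) + (B - 1) := by gcongr
    _ = A * B - 1 := by ring

theorem abs_prod_one_add_sub_one_le {ι : Type*} (S : Finset ι) {δ : ι → ℝ} {u : ℝ}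
    (hδ : ∀ k ∈ S, |δ k| ≤ u) : |∏ k ∈ S, (1 + δ k) - 1| ≤ (1 + u) ^ S.card - 1 := by
  classical
  induction S using Finset.induction with
  | empty => simp
  | insert a S ha ih =>
    rw [prod_insert ha, card_insert_of_notMem ha, pow_succ']
    refine abs_mul_sub_one_le ?_ (ih fun k hk => hδ k (mem_insert_of_mem hk))
    simpa using hδ a (mem_insert_self a S)

theorem one_add_pow_mul_one_sub_le {u : ℝ} (hu : 0 ≤ u) (n : ℕ) :
    (1 + u) ^ n * (1 - n * u) ≤ 1 := by
  induction n with
  | zero => simp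
  | succ n ih =>
    push_cast
    have hpow : 0 ≤ (1 + u) ^ n := by positivity
    calc (1 + u) ^ (n + 1) * (1 - (n + 1) * u)
        = (1 + u) ^ n * (1 - n * u) - (1 + u) ^ n * ((n + 1) * u ^ 2) := by ring
      _ ≤ 1 := by nlinarith [mul_nonneg hpow (by positivity : (0 : ℝ) ≤ (n + 1) * u ^ 2)]

theorem one_add_pow_le_one_add_gam {u : ℝ} (hu : 0 ≤ u) {n : ℕ} (hn : n * u < 1) :
    (1 + u) ^ n ≤ 1 + gam n u := by
  have hpos : 0 < 1 - n * u := by linarith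
  have : 1 + gam n u = 1 / (1 - n * u) := by
    unfold gam; field_simp; ring
  rw [this, le_div_iff₀ hpos]
  exact one_add_pow_mul_one_sub_le hu n

/-- The first two terms both enter before the first rounding, hence `max (i - 1) 1`. -/
theorem eq_sum_mul_prod_of_recurrence {m : ℕ} {a δ s : ℕ → ℝ} (hs1 : s 1 = a 1)
    (hsk : ∀ k, 1 ≤ k → k ≤ m - 1 → s (k + 1) = (s k + a (k + 1)) * (1 + δ k)) :
    ∀ n, 1 ≤ n → n ≤ m →
      s n = ∑ i ∈ Icc 1 n, a i * ∏ k ∈ Ico (max (i - 1) 1) n, (1 + δ k) := by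
  intro n hn
  induction n, hn using Nat.le_induction with
  | base => simp [hs1]
  | succ n hn ih =>
    intro hnm
    rw [hsk n hn (by omega), ih (by omega), sum_Icc_succ_top (by omega), add_mul, sum_mul]
    congr 1
    · refine sum_congr rfl fun i hi => ?_
      rw [prod_Ico_succ_top (by grind), mul_assoc]
    · rw [show max (n + 1 - 1) 1 = n by omega, prod_Ico_succ_top le_rfl, Ico_self, prod_empty,
        one_mul]

theorem stmt_10_general (m : ℕ) (hm : 2 ≤ m) (uh ul : ℝ) (huh : 0 ≤ uh)
    (hgam : ((m : ℝ) - 1) * uh < 1)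
    (x y δ : ℕ → ℝ) (hδ : ∀ k, 1 ≤ k → k ≤ m - 1 → |δ k| ≤ uh)
    (δ0 : ℝ) (hδ0 : |δ0| ≤ ul)
    (s : ℕ → ℝ) (hs1 : s 1 = x 1 * y 1)
    (hsk : ∀ k, 1 ≤ k → k ≤ m - 1 → s (k + 1) = (s k + x (k + 1) * y (k + 1)) * (1 + δ k)) :
    ∃ Δx : ℕ → ℝ,
      (∀ i, 1 ≤ i → i ≤ m →
        |Δx i| ≤ ((1 + ul) * (1 + gam ((m : ℝ) - 1) uh) - 1) * |x i|) ∧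
      (1 + δ0) * s m = ∑ i ∈ Finset.Icc 1 m, (x i + Δx i) * y i := by
  set P : ℕ → ℝ := fun i => ∏ k ∈ Ico (max (i - 1) 1) m, (1 + δ k)
  have hcast : ((m - 1 : ℕ) : ℝ) = (m : ℝ) - 1 := by rw [Nat.cast_sub (by omega), Nat.cast_one]
  refine ⟨fun i => x i * ((1 + δ0) * P i - 1), fun i _ _ => ?_, ?_⟩
  · have hP : |P i - 1| ≤ (1 + gam ((m : ℝ) - 1) uh) - 1 := by
      grw [abs_prod_one_add_sub_one_le _ fun k hk => hδ k (by grind) (by grind)]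
      gcongr ?_ - 1
      calc (1 + uh) ^ #(Ico (max (i - 1) 1) m) ≤ (1 + uh) ^ (m - 1) :=
            pow_le_pow_right₀ (by linarith) (by simp; omega)
        _ ≤ 1 + gam ((m : ℝ) - 1) uh := by
            rw [← hcast]; exact one_add_pow_le_one_add_gam huh (by rwa [hcast])
    have hδ0' : |(1 + δ0) - 1| ≤ (1 + ul) - 1 := by simpa using hδ0
    rw [abs_mul, mul_comm]
    gcongr
    exact abs_mul_sub_one_le hδ0' hP
  · rw [eq_sum_mul_prod_of_recurrence (a := fun i => x i * y i) hs1 hsk m (by omega) le_rfl,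
      mul_sum]
    exact sum_congr rfl fun i _ => by ring

/-- Backward error of the mixed precision inner product with a final cast down:
exact products, `m−1` additions each with relative error at most `u_h`, and one
final relative error `δ₀` with `|δ₀| ≤ u_l`. Then
`(1+δ₀)·ŝ_m = Σ_{i=1}^m (xᵢ + Δxᵢ)yᵢ` with
`|Δxᵢ| ≤ ((1+u_l)(1+γ_{m−1}(u_h)) − 1)·|xᵢ|`. -/
theorem stmt_10 (m : ℕ) (hm : 2 ≤ m) (uh ul : ℝ) (huh : 0 ≤ uh) (hul : 0 ≤ ul)
    (hgam : ((m : ℝ) - 1) * uh < 1)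
    (x y δ : ℕ → ℝ) (hδ : ∀ k, 1 ≤ k → k ≤ m - 1 → |δ k| ≤ uh)
    (δ0 : ℝ) (hδ0 : |δ0| ≤ ul)
    (s : ℕ → ℝ) (hs1 : s 1 = x 1 * y 1)
    (hsk : ∀ k, 1 ≤ k → k ≤ m - 1 → s (k + 1) = (s k + x (k + 1) * y (k + 1)) * (1 + δ k)) :
    ∃ Δx : ℕ → ℝ,
      (∀ i, 1 ≤ i → i ≤ m →
        |Δx i| ≤ ((1 + ul) * (1 + gam ((m : ℝ) - 1) uh) - 1) * |x i|) ∧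
      (1 + δ0) * s m = ∑ i ∈ Finset.Icc 1 m, (x i + Δx i) * y i :=
  stmt_10_general m hm uh ul huh hgam x y δ hδ δ0 hδ0 s hs1 hsk
end

section
/- Let m ≥ 1 and let x ∈ ℝ^m be a nonzero vector. Define σ := −sign(x₁)·‖x‖₂, where sign(t) = 1 if t ≥ 0 and −1 otherwise, and v := x − σ·e₁. Then v₁ = x₁ − σ ≠ 0, and the normalized Householder vector v̄ := v/v₁ (which has first component 1) together with the constant β̄ := −v₁/σ satisfies (I − β̄·v̄·v̄ᵀ)·x = σ·e₁. -/
open Matrix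

/-- Euclidean norm of a vector in `ℝ^m`. -/
noncomputable def enorm2 {m : ℕ} (x : Fin m → ℝ) : ℝ := Real.sqrt (∑ i, x i ^ 2)

/-- First standard basis vector of `ℝ^m`. -/
def e1 {m : ℕ} (hm : 0 < m) : Fin m → ℝ := Pi.single (⟨0, hm⟩ : Fin m) (1 : ℝ)

/-!
With `v = x - σ e₁` and `σ² = ‖x‖²` one has `vᵀx = ‖x‖² - σ x₁ = -σ v₁`, so the rank-one
correction `β̄ v̄ v̄ᵀ x` is exactly `v` (the factors `v₁` in `v̄` and `β̄` cancel) and the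
reflector maps `x` to `x - v = σ e₁`. Choosing the sign of `σ` opposite to that of `x₁` makes
`v₁ = x₁ + sign(x₁) ‖x‖` a sum of two terms of the same sign, hence nonzero.
-/
section Householder

variable {K ι : Type*} [Field K] [Fintype ι] [DecidableEq ι]

theorem one_sub_smul_vecMulVec_self_mulVec (β : K) (w x : ι → K) :
    (1 - β • vecMulVec w w) *ᵥ x = x - (β * (w ⬝ᵥ x)) • w := by
  rw [sub_mulVec, one_mulVec, smul_mulVec, vecMulVec_mulVec, op_smul_eq_smul, smul_smul]

theorem sub_smul_single_one_dotProduct (x : ι → K) (σ : K) (i : ι) :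
    (x - σ • Pi.single i 1) ⬝ᵥ x = x ⬝ᵥ x - σ * x i := by
  rw [sub_dotProduct, smul_dotProduct, single_one_dotProduct, smul_eq_mul]

theorem normalized_householder_mulVec {x v : ι → K} {σ : K} {i : ι} (hσ : σ ≠ 0)
    (hσx : σ ^ 2 = x ⬝ᵥ x) (hv : v = x - σ • Pi.single i 1) (hvi : v i ≠ 0) :
    (1 - (-v i / σ) • vecMulVec ((v i)⁻¹ • v) ((v i)⁻¹ • v)) *ᵥ x = σ • Pi.single i 1 := by
  have hvx : v ⬝ᵥ x = -σ * v i := by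
    rw [hv, sub_smul_single_one_dotProduct, ← hσx]
    simp only [Pi.sub_apply, Pi.smul_apply, Pi.single_eq_same, smul_eq_mul]
    ring
  have hcoeff : -v i / σ * ((v i)⁻¹ • v ⬝ᵥ x) = v i := by
    rw [smul_dotProduct, hvx, smul_eq_mul]
    field_simp
  rw [one_sub_smul_vecMulVec_self_mulVec, hcoeff, smul_inv_smul₀ hvi, hv, sub_sub_cancel]

end Householder

theorem dotProduct_self_nonneg {R n : Type*} [Ring R] [LinearOrder R] [IsStrictOrderedRing R]
    [Fintype n] (v : n → R) : 0 ≤ v ⬝ᵥ v :=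
  Fintype.sum_nonneg fun i => mul_self_nonneg (v i)

theorem enorm2_eq_sqrt_dotProduct {m : ℕ} (x : Fin m → ℝ) : enorm2 x = √(x ⬝ᵥ x) := by
  simp only [enorm2, dotProduct, sq]

theorem sq_enorm2 {m : ℕ} (x : Fin m → ℝ) : enorm2 x ^ 2 = x ⬝ᵥ x := by
  rw [enorm2_eq_sqrt_dotProduct, Real.sq_sqrt (dotProduct_self_nonneg x)]

theorem enorm2_pos {m : ℕ} {x : Fin m → ℝ} (hx : x ≠ 0) : 0 < enorm2 x := by
  rw [enorm2_eq_sqrt_dotProduct, Real.sqrt_pos]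
  exact (dotProduct_self_nonneg x).lt_of_ne' (dotProduct_self_eq_zero.not.mpr hx)

theorem add_sign_mul_ne_zero {a r : ℝ} (hr : 0 < r) :
    a + (if 0 ≤ a then 1 else -1) * r ≠ 0 := by
  split_ifs <;> linarith

/-- LAPACK-style normalized Householder reflector: for nonzero `x ∈ ℝ^m`, with
`σ = −sign(x₁)·‖x‖₂` and `v = x − σe₁`, the first component `v₁ = x₁ − σ` is
nonzero, the normalized vector `v̄ = v/v₁` has first component `1`, and with
`β̄ = −v₁/σ` one has `(I − β̄·v̄·v̄ᵀ)·x = σ·e₁`. -/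
theorem stmt_14 (m : ℕ) (hm : 0 < m) (x : Fin m → ℝ) (hx : x ≠ 0)
    (σ : ℝ)
    (hσ : σ = -(if 0 ≤ x ⟨0, hm⟩ then (1 : ℝ) else -1) * enorm2 x)
    (v : Fin m → ℝ) (hv : v = x - σ • e1 hm)
    (vbar : Fin m → ℝ) (hvbar : vbar = (v ⟨0, hm⟩)⁻¹ • v)
    (βbar : ℝ) (hβbar : βbar = -(v ⟨0, hm⟩) / σ) :
    v ⟨0, hm⟩ = x ⟨0, hm⟩ - σ ∧
    v ⟨0, hm⟩ ≠ 0 ∧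
    vbar ⟨0, hm⟩ = 1 ∧
    ((1 : Matrix (Fin m) (Fin m) ℝ) - βbar • Matrix.vecMulVec vbar vbar).mulVec x
      = σ • e1 hm := by
  have hv₁ : v ⟨0, hm⟩ = x ⟨0, hm⟩ - σ := by simp [hv, e1]
  have hv₁_ne : v ⟨0, hm⟩ ≠ 0 := by
    rw [hv₁, hσ, sub_eq_add_neg, ← neg_mul, neg_neg]
    exact add_sign_mul_ne_zero (enorm2_pos hx)
  have hσ_sq : σ ^ 2 = x ⬝ᵥ x := by
    rw [hσ, mul_pow, sq_enorm2]
    split_ifs <;> norm_num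
  have hσ_ne : σ ≠ 0 := by
    rintro rfl
    exact hx (dotProduct_self_eq_zero.mp (by simpa using hσ_sq.symm))
  refine ⟨hv₁, hv₁_ne, by simp [hvbar, hv₁_ne], ?_⟩
  rw [hβbar, hvbar]
  exact normalized_householder_mulVec hσ_ne hσ_sq hv hv₁_ne
end

section
/- Let m, j ≥ 1, let W and Y be real m×j matrices such that X := I − W·Yᵀ is orthogonal, let v ∈ ℝ^m and β ∈ ℝ, and set P := I − β·v·vᵀ and z := β·X·v. Then X·P = I − (W·Yᵀ + z·vᵀ); equivalently, writing W' for the m×(j+1) matrix obtained by appending the column z to W and Y' for the m×(j+1) matrix obtained by appending the column v to Y, one has X·P = I − W'·Y'ᵀ. -/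
open Matrix

/-- Updating the WY representation by one Householder factor: if
`X = I − WYᵀ` is orthogonal, `P = I − βvvᵀ` and `z = βXv`, then
`XP = I − (WYᵀ + zvᵀ) = I − W'Y'ᵀ`, where `W'` appends the column `z` to `W`
and `Y'` appends the column `v` to `Y`. -/
theorem stmt_19 (m j : ℕ) (hm : 0 < m) (hj : 0 < j)
    (W Y : Matrix (Fin m) (Fin j) ℝ)
    (X : Matrix (Fin m) (Fin m) ℝ) (hX : X = 1 - W * Yᵀ)
    (horth : Xᵀ * X = 1)
    (v : Fin m → ℝ) (β : ℝ)
    (P : Matrix (Fin m) (Fin m) ℝ) (hP : P = 1 - β • Matrix.vecMulVec v v)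
    (z : Fin m → ℝ) (hz : z = β • X.mulVec v)
    (W' Y' : Matrix (Fin m) (Fin (j + 1)) ℝ)
    (hW' : W' = Matrix.of fun i k => Fin.snoc (W i) (z i) k)
    (hY' : Y' = Matrix.of fun i k => Fin.snoc (Y i) (v i) k) :
    X * P = 1 - (W * Yᵀ + Matrix.vecMulVec z v) ∧
    X * P = 1 - W' * Y'ᵀ := by
  have key : X * (β • Matrix.vecMulVec v v) = Matrix.vecMulVec z v := by
    ext i k
    simp [Matrix.mul_apply, Matrix.vecMulVec_apply, hz, Matrix.mulVec, dotProduct,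
      Finset.mul_sum, Finset.sum_mul]
    congr 1; ext l; ring
  have h1 : X * P = 1 - (W * Yᵀ + Matrix.vecMulVec z v) := by
    rw [hP, Matrix.mul_sub, Matrix.mul_one, key, hX]
    rw [sub_sub]
  refine ⟨h1, ?_⟩
  rw [h1]
  congr 1
  ext i k
  simp [Matrix.mul_apply, hW', hY', Fin.sum_univ_castSucc, Matrix.vecMulVec_apply]
end
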